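/- arXiv:2210.00111 — 5 statements merged into one kernel-verified Lean document; each statement's English description precedes it below -/
import Mathlib

section
/- Consider the linear model y = α·1_n + X·β + ε, where ε = (ε_1, …, ε_n) is a vector of integrable real random variables with E[ε_i] = 0 for all i. Let S be an r×n selection matrix and suppose X_c*ᵀX_c* is invertible, where X_c* = S·(I_n − J_n)·X. Then the subsample ordinary least squares slope estimator obtained from the model without intercept, β̃_c = (X_c*ᵀX_c*)⁻¹·X_c*ᵀ·y_c* with y_c* = S·(I_n − J_n)·y, is unbiased: E[β̃_c] = β (componentwise). -/
open Matrix MeasureTheory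

/-- For the linear model `y = α·1_n + X·β + ε` with centered random errors,
a selection matrix `S`, and invertible `X_c*ᵀX_c*` where `X_c* = S(I_n − J_n)X`,
the no-intercept subsample OLS slope estimator
`β̃_c = (X_c*ᵀX_c*)⁻¹X_c*ᵀ y_c*` with `y_c* = S(I_n − J_n)y` is unbiased: `E[β̃_c] = β`. -/
theorem subsample_centered_ols_unbiased {Ω : Type*} [MeasureSpace Ω]
    [IsProbabilityMeasure (volume : Measure Ω)]
    (n r p : ℕ) (hn : 1 ≤ n)
    (X : Matrix (Fin n) (Fin p) ℝ) (α : ℝ) (β : Fin p → ℝ)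
    (ε : Ω → Fin n → ℝ)
    (hεint : ∀ i, Integrable (fun ω => ε ω i))
    (hεmean : ∀ i, ∫ ω, ε ω i = 0)
    (y : Ω → Fin n → ℝ)
    (hy : ∀ ω, y ω = α • (1 : Fin n → ℝ) + X *ᵥ β + ε ω)
    (S : Matrix (Fin r) (Fin n) ℝ)
    (hS : ∃ φ : Fin r → Fin n, Function.Injective φ ∧
      ∀ i j, S i j = if j = φ i then 1 else 0)
    (Jn : Matrix (Fin n) (Fin n) ℝ)
    (hJn : Jn = (n : ℝ)⁻¹ • vecMulVec (1 : Fin n → ℝ) (1 : Fin n → ℝ))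
    (Xc : Matrix (Fin r) (Fin p) ℝ) (hXc : Xc = S * (1 - Jn) * X)
    (hinv : IsUnit (Xcᵀ * Xc))
    (yc : Ω → Fin r → ℝ) (hyc : ∀ ω, yc ω = (S * (1 - Jn)) *ᵥ y ω)
    (βc : Ω → Fin p → ℝ)
    (hβc : ∀ ω, βc ω = (Xcᵀ * Xc)⁻¹ *ᵥ (Xcᵀ *ᵥ yc ω)) :
    ∀ k, ∫ ω, βc ω k = β k := by
  intro k
  set A := S * (1 - Jn) with hA
  set M := (Xcᵀ * Xc)⁻¹ * Xcᵀ * A with hM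
  have hdet : IsUnit (Xcᵀ * Xc).det := (Matrix.isUnit_iff_isUnit_det _).mp hinv
  -- (1 - Jn) *ᵥ 1 = 0
  have hJ1 : (1 - Jn) *ᵥ (1 : Fin n → ℝ) = 0 := by
    funext i
    simp only [Matrix.sub_mulVec, Matrix.one_mulVec, hJn, Matrix.smul_mulVec]
    have : vecMulVec (1 : Fin n → ℝ) (1 : Fin n → ℝ) *ᵥ (1 : Fin n → ℝ) = fun _ => (n : ℝ) := by
      funext j
      simp [Matrix.mulVec, Matrix.vecMulVec_apply, dotProduct]
    rw [this]
    have hn0 : (n : ℝ) ≠ 0 := by positivity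
    simp [hn0]
  have key : ∀ ω, βc ω = β + M *ᵥ ε ω := by
    intro ω
    have hyω : yc ω = Xc *ᵥ β + A *ᵥ ε ω := by
      rw [hyc, hy]
      rw [Matrix.mulVec_add, Matrix.mulVec_add]
      have h1 : A *ᵥ (α • (1 : Fin n → ℝ)) = 0 := by
        rw [Matrix.mulVec_smul, hA, ← Matrix.mulVec_mulVec, hJ1]
        simp
      have h2 : A *ᵥ (X *ᵥ β) = Xc *ᵥ β := by
        rw [Matrix.mulVec_mulVec, ← hXc]
      rw [h1, h2, zero_add]
    rw [hβc, hyω, Matrix.mulVec_add, Matrix.mulVec_add]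
    congr 1
    · rw [Matrix.mulVec_mulVec, Matrix.mulVec_mulVec, Matrix.mul_assoc,
        Matrix.nonsing_inv_mul _ hdet, Matrix.one_mulVec]
    · rw [hM, Matrix.mulVec_mulVec, Matrix.mulVec_mulVec]
  have hcomp : ∀ ω, βc ω k = β k + ∑ j, M k j * ε ω j := by
    intro ω
    rw [key ω]
    simp [Matrix.mulVec, dotProduct]
  calc ∫ ω, βc ω k = ∫ ω, (β k + ∑ j, M k j * ε ω j) := by
        exact integral_congr_ae (Filter.Eventually.of_forall hcomp)
    _ = β k := by
        rw [integral_add (integrable_const _)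
          (integrable_finset_sum _ fun j _ => (hεint j).const_mul _)]
        rw [integral_finset_sum _ fun j _ => (hεint j).const_mul _]
        simp [integral_const_mul, hεmean]
end

section
/- Let X be an n×p real matrix and S an r×n selection matrix, and define X* = S·X, x̄ = n⁻¹·Xᵀ·1_n, x̄* = r⁻¹·X*ᵀ·1_r, X_c* = X* − 1_r·x̄ᵀ, X_cr* = X* − 1_r·x̄*ᵀ. Assume X_cr*ᵀ·X_cr* is positive definite (equivalently, Z* = (1_r X*) has full column rank). Then X_c*ᵀ·X_c* is also positive definite, and the scalar d = r·(x̄* − x̄)ᵀ·(X_c*ᵀ·X_c*)⁻¹·(x̄* − x̄) satisfies d < 1. -/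
open Matrix

/-!
Centering by the subsample mean makes the columns of `X_cr*` sum to zero, and
`X_c* = X_cr* + 1 δᵀ` with `δ = x̄* − x̄`, so `X_c*ᵀX_c* = B + r δδᵀ` with
`B = X_cr*ᵀX_cr*` positive definite. For `w = (B + r δδᵀ)⁻¹δ` and `t = δᵀw`, the quadratic
form at `w` gives `t = wᵀBw + r t²`, i.e. `d = r t` satisfies `d = r wᵀBw + d²`; as `wᵀBw > 0`
unless `w = 0`, this forces `d < 1`.
-/

namespace Matrix

variable {m n : Type*} [Fintype m]

theorem one_vecMul_sub_vecMulVec_mean (M : Matrix m n ℝ) :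
    (1 : m → ℝ) ᵥ* (M - vecMulVec 1 ((Fintype.card m : ℝ)⁻¹ • (Mᵀ *ᵥ 1))) = 0 := by
  rcases isEmpty_or_nonempty m with _ | _
  · ext j; simp [vecMul, dotProduct]
  · rw [vecMul_sub, vecMul_vecMulVec, ← vecMul_transpose, transpose_transpose]
    simp [dotProduct, smul_smul]

theorem transpose_mul_self_add_vecMulVec_one {C : Matrix m n ℝ}
    (hC : (1 : m → ℝ) ᵥ* C = 0) (δ : n → ℝ) :
    (C + vecMulVec 1 δ)ᵀ * (C + vecMulVec 1 δ) =
      Cᵀ * C + (Fintype.card m : ℝ) • vecMulVec δ δ := by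
  rw [transpose_add, transpose_vecMulVec, Matrix.add_mul, Matrix.mul_add, Matrix.mul_add,
    mul_vecMulVec, vecMulVec_mul, vecMulVec_mul_vecMulVec, mulVec_transpose, hC]
  simp [dotProduct]

variable [Fintype n]

theorem PosDef.add_smul_vecMulVec_self {B : Matrix n n ℝ} (hB : B.PosDef) {c : ℝ} (hc : 0 ≤ c)
    (δ : n → ℝ) : (B + c • vecMulVec δ δ).PosDef :=
  hB.add_posSemidef ((posSemidef_vecMulVec_self_star δ).smul hc)

theorem dotProduct_add_smul_vecMulVec_self_mulVec (B : Matrix n n ℝ) (c : ℝ) (δ w : n → ℝ) :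
    w ⬝ᵥ ((B + c • vecMulVec δ δ) *ᵥ w) = w ⬝ᵥ (B *ᵥ w) + c * (δ ⬝ᵥ w) ^ 2 := by
  rw [add_mulVec, smul_mulVec, vecMulVec_mulVec]
  simp [dotProduct_add, dotProduct_comm w δ, sq]

theorem PosDef.smul_dotProduct_inv_add_smul_vecMulVec_self_lt_one [DecidableEq n]
    {B : Matrix n n ℝ} (hB : B.PosDef) {c : ℝ} (hc : 0 ≤ c) (δ : n → ℝ) :
    c * (δ ⬝ᵥ ((B + c • vecMulVec δ δ)⁻¹ *ᵥ δ)) < 1 := by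
  set A := B + c • vecMulVec δ δ
  set w := A⁻¹ *ᵥ δ
  have hAw : A *ᵥ w = δ := by
    rw [mulVec_mulVec, mul_nonsing_inv _ (hB.add_smul_vecMulVec_self hc δ).det_pos.ne'.isUnit,
      one_mulVec]
  have hform : δ ⬝ᵥ w = w ⬝ᵥ (B *ᵥ w) + c * (δ ⬝ᵥ w) ^ 2 := by
    rw [← dotProduct_add_smul_vecMulVec_self_mulVec, hAw, dotProduct_comm]
  rcases eq_or_ne w 0 with hw | hw
  · simp [hw]
  · have hq := hB.dotProduct_mulVec_pos hw
    simp only [star_trivial] at hq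
    nlinarith [mul_nonneg hc (sq_nonneg (δ ⬝ᵥ w))]

end Matrix

theorem subsample_centering_d_lt_one_general (r p : ℕ)
    (Xstar : Matrix (Fin r) (Fin p) ℝ)
    (xbar : Fin p → ℝ)
    (xbarstar : Fin p → ℝ)
    (hxbarstar : xbarstar = (r : ℝ)⁻¹ • (Xstarᵀ *ᵥ (1 : Fin r → ℝ)))
    (Xc : Matrix (Fin r) (Fin p) ℝ)
    (hXc : Xc = Xstar - vecMulVec (1 : Fin r → ℝ) xbar)
    (Xcr : Matrix (Fin r) (Fin p) ℝ)
    (hXcr : Xcr = Xstar - vecMulVec (1 : Fin r → ℝ) xbarstar)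
    (hpd : (Xcrᵀ * Xcr).PosDef)
    (d : ℝ)
    (hd : d = (r : ℝ) * ((xbarstar - xbar) ⬝ᵥ ((Xcᵀ * Xc)⁻¹ *ᵥ (xbarstar - xbar)))) :
    (Xcᵀ * Xc).PosDef ∧ d < 1 := by
  have hcentered : (1 : Fin r → ℝ) ᵥ* Xcr = 0 := by
    have := one_vecMul_sub_vecMulVec_mean Xstar
    rwa [Fintype.card_fin, ← hxbarstar, ← hXcr] at this
  have hshift : Xc = Xcr + vecMulVec 1 (xbarstar - xbar) := by
    rw [hXc, hXcr, vecMulVec_sub]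
    abel
  have hgram :
      Xcᵀ * Xc = Xcrᵀ * Xcr + (r : ℝ) • vecMulVec (xbarstar - xbar) (xbarstar - xbar) := by
    rw [hshift, transpose_mul_self_add_vecMulVec_one hcentered, Fintype.card_fin]
  rw [hd, hgram]
  exact ⟨hpd.add_smul_vecMulVec_self r.cast_nonneg _,
    hpd.smul_dotProduct_inv_add_smul_vecMulVec_self_lt_one r.cast_nonneg _⟩

/-- In the setting of subsample centering, if `X_cr*ᵀX_cr*` is positive
definite, then `X_c*ᵀX_c*` is positive definite and
`d = r(x̄* − x̄)ᵀ(X_c*ᵀX_c*)⁻¹(x̄* − x̄) < 1`. -/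
theorem subsample_centering_d_lt_one (n r p : ℕ) (hn : 1 ≤ n) (hr : 1 ≤ r)
    (X : Matrix (Fin n) (Fin p) ℝ)
    (S : Matrix (Fin r) (Fin n) ℝ)
    (hS : ∃ φ : Fin r → Fin n, Function.Injective φ ∧
      ∀ i j, S i j = if j = φ i then 1 else 0)
    (Xstar : Matrix (Fin r) (Fin p) ℝ) (hXstar : Xstar = S * X)
    (xbar : Fin p → ℝ) (hxbar : xbar = (n : ℝ)⁻¹ • (Xᵀ *ᵥ (1 : Fin n → ℝ)))
    (xbarstar : Fin p → ℝ)
    (hxbarstar : xbarstar = (r : ℝ)⁻¹ • (Xstarᵀ *ᵥ (1 : Fin r → ℝ)))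
    (Xc : Matrix (Fin r) (Fin p) ℝ)
    (hXc : Xc = Xstar - vecMulVec (1 : Fin r → ℝ) xbar)
    (Xcr : Matrix (Fin r) (Fin p) ℝ)
    (hXcr : Xcr = Xstar - vecMulVec (1 : Fin r → ℝ) xbarstar)
    (hpd : (Xcrᵀ * Xcr).PosDef)
    (d : ℝ)
    (hd : d = (r : ℝ) * ((xbarstar - xbar) ⬝ᵥ ((Xcᵀ * Xc)⁻¹ *ᵥ (xbarstar - xbar)))) :
    (Xcᵀ * Xc).PosDef ∧ d < 1 :=
  subsample_centering_d_lt_one_general r p Xstar xbar xbarstar hxbarstar Xc hXc Xcr hXcr hpd d hd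
end

section
/- Let X be an n×p real matrix and S an r×n selection matrix, and define X* = S·X, x̄ = n⁻¹·Xᵀ·1_n, x̄* = r⁻¹·X*ᵀ·1_r, X_c* = X* − 1_r·x̄ᵀ, X_cr* = X* − 1_r·x̄*ᵀ. Assume X_cr*ᵀ·X_cr* is positive definite, and let d = r·(x̄* − x̄)ᵀ·(X_c*ᵀ·X_c*)⁻¹·(x̄* − x̄). Then (X_cr*ᵀ·X_cr*)⁻¹ = (X_c*ᵀ·X_c*)⁻¹ + (r/(1 − d))·(X_c*ᵀ·X_c*)⁻¹·(x̄* − x̄)·(x̄* − x̄)ᵀ·(X_c*ᵀ·X_c*)⁻¹. -/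
/-!
The subsample-centred matrix `X_c*` is `X_cr* + 1_r (x̄* − x̄)ᵀ`, and the columns of `X_cr*` sum
to zero, so the cross terms of its Gram matrix vanish: `X_c*ᵀX_c* = X_cr*ᵀX_cr* + r v vᵀ` with
`v = x̄* − x̄`. Hence `X_cr*ᵀX_cr*` is a rank-one downdate of the positive definite `X_c*ᵀX_c*`,
and the claim is the Sherman–Morrison formula; its denominator `1 − d` is nonzero because the
matrix determinant lemma gives `det (X_cr*ᵀX_cr*) = det (X_c*ᵀX_c*) · (1 − d)`.
-/

open Matrix

namespace Matrix

variable {ι m K : Type*} [Fintype ι] [Field K]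

theorem transpose_sub_vecMulVec_mean_mulVec_one [CharZero K] (M : Matrix ι m K) :
    (M - vecMulVec 1 ((Fintype.card ι : K)⁻¹ • (Mᵀ *ᵥ 1)))ᵀ *ᵥ 1 = 0 := by
  rw [transpose_sub, sub_mulVec, transpose_vecMulVec, vecMulVec_mulVec, one_dotProduct_one,
    op_smul_eq_smul, smul_smul]
  rcases isEmpty_or_nonempty ι with _ | _
  · ext; simp [mulVec, dotProduct]
  · rw [mul_inv_cancel₀ (by simp), one_smul, sub_self]

theorem add_vecMulVec_one_transpose_mul_self {B : Matrix ι m K} (hB : Bᵀ *ᵥ 1 = 0) (v : m → K) :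
    (B + vecMulVec 1 v)ᵀ * (B + vecMulVec 1 v) =
      Bᵀ * B + (Fintype.card ι : K) • vecMulVec v v := by
  rw [mulVec_transpose] at hB
  rw [transpose_add, transpose_vecMulVec, Matrix.add_mul, Matrix.mul_add, Matrix.mul_add,
    mul_vecMulVec, vecMulVec_mul, vecMulVec_mul_vecMulVec, mulVec_transpose, hB, one_dotProduct_one,
    vecMulVec_smul]
  simp

variable [Fintype m] [DecidableEq m]

theorem det_sub_smul_vecMulVec {A : Matrix m m K} (hA : IsUnit A.det) (c : K) (u v : m → K) :
    (A - c • vecMulVec u v).det = A.det * (1 - c * (v ⬝ᵥ (A⁻¹ *ᵥ u))) := by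
  rw [sub_eq_add_neg, ← neg_smul, ← smul_vecMulVec, vecMulVec_eq Unit,
    det_add_replicateCol_mul_replicateRow hA]
  congr 1
  rw [det_unique, Matrix.add_apply, Matrix.one_apply_eq, Matrix.mul_assoc, ← replicateCol_mulVec,
    replicateRow_mul_replicateCol_apply, mulVec_smul, dotProduct_smul, smul_eq_mul, neg_mul,
    sub_eq_add_neg]

theorem inv_sub_smul_vecMulVec {A : Matrix m m K} (hA : IsUnit A.det) (c : K) (u v : m → K)
    (h : 1 - c * (v ⬝ᵥ (A⁻¹ *ᵥ u)) ≠ 0) :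
    (A - c • vecMulVec u v)⁻¹ =
      A⁻¹ + (c / (1 - c * (v ⬝ᵥ (A⁻¹ *ᵥ u)))) • (A⁻¹ * vecMulVec u v * A⁻¹) := by
  set s := v ⬝ᵥ (A⁻¹ *ᵥ u)
  set k := c / (1 - c * s)
  have hk : k - c - c * k * s = 0 := by
    simp only [k]; field_simp; ring
  have hUAU : vecMulVec u v * A⁻¹ * vecMulVec u v = s • vecMulVec u v := by
    rw [vecMulVec_mul, vecMulVec_mul_vecMulVec, vecMulVec_smul, ← dotProduct_mulVec]
  apply inv_eq_right_inv
  calc (A - c • vecMulVec u v) * (A⁻¹ + k • (A⁻¹ * vecMulVec u v * A⁻¹))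
      = 1 + (k - c - c * k * s) • (vecMulVec u v * A⁻¹) := by
        simp only [Matrix.sub_mul, Matrix.mul_add, Matrix.mul_smul, Matrix.smul_mul,
          ← Matrix.mul_assoc, mul_nonsing_inv _ hA, Matrix.one_mul]
        rw [hUAU, Matrix.smul_mul]
        module
    _ = 1 := by rw [hk, zero_smul, add_zero]

end Matrix

theorem subsample_centering_sherman_morrison_general (r p : ℕ)
    (Xstar : Matrix (Fin r) (Fin p) ℝ)
    (xbar : Fin p → ℝ)
    (xbarstar : Fin p → ℝ)
    (hxbarstar : xbarstar = (r : ℝ)⁻¹ • (Xstarᵀ *ᵥ (1 : Fin r → ℝ)))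
    (Xc : Matrix (Fin r) (Fin p) ℝ)
    (hXc : Xc = Xstar - vecMulVec (1 : Fin r → ℝ) xbar)
    (Xcr : Matrix (Fin r) (Fin p) ℝ)
    (hXcr : Xcr = Xstar - vecMulVec (1 : Fin r → ℝ) xbarstar)
    (hpd : (Xcrᵀ * Xcr).PosDef)
    (d : ℝ)
    (hd : d = (r : ℝ) * ((xbarstar - xbar) ⬝ᵥ ((Xcᵀ * Xc)⁻¹ *ᵥ (xbarstar - xbar)))) :
    (Xcrᵀ * Xcr)⁻¹ =
      (Xcᵀ * Xc)⁻¹ +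
        ((r : ℝ) / (1 - d)) •
          ((Xcᵀ * Xc)⁻¹ * vecMulVec (xbarstar - xbar) (xbarstar - xbar) *
            (Xcᵀ * Xc)⁻¹) := by
  set v := xbarstar - xbar
  have hcentred : Xcrᵀ *ᵥ 1 = 0 := by
    simpa [hXcr, hxbarstar] using transpose_sub_vecMulVec_mean_mulVec_one Xstar
  have hXc' : Xc = Xcr + vecMulVec 1 v := by
    ext; simp [hXc, hXcr, v]
  have hgram : Xcᵀ * Xc = Xcrᵀ * Xcr + (r : ℝ) • vecMulVec v v := by
    simpa [hXc'] using add_vecMulVec_one_transpose_mul_self hcentred v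
  have hA : IsUnit (Xcᵀ * Xc).det := by
    have hvv : (vecMulVec v v).PosSemidef := by simpa using posSemidef_vecMulVec_self_star v
    have hApd : (Xcᵀ * Xc).PosDef := hgram ▸ hpd.add_posSemidef (hvv.smul r.cast_nonneg)
    exact (isUnit_iff_isUnit_det _).mp hApd.isUnit
  have hB : Xcrᵀ * Xcr = Xcᵀ * Xc - (r : ℝ) • vecMulVec v v := by
    rw [hgram, add_sub_cancel_right]
  have hd1 : 1 - d ≠ 0 := by
    have hBdet := hpd.det_pos.ne'
    rw [hB, det_sub_smul_vecMulVec hA, ← hd] at hBdet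
    exact right_ne_zero_of_mul hBdet
  rw [hB, hd, inv_sub_smul_vecMulVec hA _ _ _ (hd ▸ hd1)]

/-- Sherman–Morrison identity for the subsample Gram matrices:
`(X_cr*ᵀX_cr*)⁻¹ = (X_c*ᵀX_c*)⁻¹ + (r/(1−d))(X_c*ᵀX_c*)⁻¹(x̄*−x̄)(x̄*−x̄)ᵀ(X_c*ᵀX_c*)⁻¹`
where `d = r(x̄* − x̄)ᵀ(X_c*ᵀX_c*)⁻¹(x̄* − x̄)`. -/
theorem subsample_centering_sherman_morrison (n r p : ℕ) (hn : 1 ≤ n) (hr : 1 ≤ r)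
    (X : Matrix (Fin n) (Fin p) ℝ)
    (S : Matrix (Fin r) (Fin n) ℝ)
    (hS : ∃ φ : Fin r → Fin n, Function.Injective φ ∧
      ∀ i j, S i j = if j = φ i then 1 else 0)
    (Xstar : Matrix (Fin r) (Fin p) ℝ) (hXstar : Xstar = S * X)
    (xbar : Fin p → ℝ) (hxbar : xbar = (n : ℝ)⁻¹ • (Xᵀ *ᵥ (1 : Fin n → ℝ)))
    (xbarstar : Fin p → ℝ)
    (hxbarstar : xbarstar = (r : ℝ)⁻¹ • (Xstarᵀ *ᵥ (1 : Fin r → ℝ)))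
    (Xc : Matrix (Fin r) (Fin p) ℝ)
    (hXc : Xc = Xstar - vecMulVec (1 : Fin r → ℝ) xbar)
    (Xcr : Matrix (Fin r) (Fin p) ℝ)
    (hXcr : Xcr = Xstar - vecMulVec (1 : Fin r → ℝ) xbarstar)
    (hpd : (Xcrᵀ * Xcr).PosDef)
    (d : ℝ)
    (hd : d = (r : ℝ) * ((xbarstar - xbar) ⬝ᵥ ((Xcᵀ * Xc)⁻¹ *ᵥ (xbarstar - xbar)))) :
    (Xcrᵀ * Xcr)⁻¹ =
      (Xcᵀ * Xc)⁻¹ +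
        ((r : ℝ) / (1 - d)) •
          ((Xcᵀ * Xc)⁻¹ * vecMulVec (xbarstar - xbar) (xbarstar - xbar) *
            (Xcᵀ * Xc)⁻¹) :=
  subsample_centering_sherman_morrison_general r p Xstar xbar xbarstar hxbarstar Xc hXc Xcr hXcr hpd
    d hd
end

section
/- Consider the linear model y = α·1_n + X·β + ε, where ε = (ε_1, …, ε_n) are square-integrable real random variables with E[ε_i] = 0 and E[ε_i·ε_j] = σ²·δ_{ij}. Let S be an r×n selection matrix and suppose X_c*ᵀX_c* is invertible, where X_c* = S·(I_n − J_n)·X. Then the slope estimator β̃_c = (X_c*ᵀX_c*)⁻¹·X_c*ᵀ·y_c*, with y_c* = S·(I_n − J_n)·y, has covariance matrix E[(β̃_c − β)·(β̃_c − β)ᵀ] = σ²·(X_c*ᵀX_c*)⁻¹ − σ²·(r²/n)·(X_c*ᵀX_c*)⁻¹·(x̄* − x̄)·(x̄* − x̄)ᵀ·(X_c*ᵀX_c*)⁻¹ (entrywise), where x̄ = n⁻¹·Xᵀ·1_n and x̄* = r⁻¹·(S·X)ᵀ·1_r. -/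
open Matrix MeasureTheory

/-!
Because `(I - J) 1 = 0`, centering removes the intercept and `β̃_c - β = A ε` with
`A = G⁻¹ X_c*ᵀ S (I - J)`, `G = X_c*ᵀ X_c*`. Uncorrelated errors give covariance `σ² A Aᵀ`, and as
`I - J` is a symmetric idempotent, `A Aᵀ = G⁻¹ X_c*ᵀ (S (I - J) Sᵀ) X_c* G⁻¹`.
As `S Sᵀ = I` and `S 1 = 1`, the middle factor is
`I - n⁻¹ 1 1ᵀ`, and the rank-one correction is governed by `X_c*ᵀ 1 = r (x̄* - x̄)`.
-/

-- `meanMatrix ι` is the paper's `J_n`, and `colMean X` its `x̄`.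
noncomputable def meanMatrix (ι : Type*) [Fintype ι] : Matrix ι ι ℝ :=
  (Fintype.card ι : ℝ)⁻¹ • vecMulVec 1 1

noncomputable def colMean {ι κ : Type*} [Fintype ι] (A : Matrix ι κ ℝ) : κ → ℝ :=
  (Fintype.card ι : ℝ)⁻¹ • (Aᵀ *ᵥ 1)

section Centering

variable {ι κ π : Type*} [Fintype ι]

theorem natCast_card_smul_colMean (A : Matrix ι π ℝ) :
    (Fintype.card ι : ℝ) • colMean A = Aᵀ *ᵥ 1 := by
  rcases isEmpty_or_nonempty ι
  · ext; simp [mulVec, dotProduct]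
  · rw [colMean, smul_smul, mul_inv_cancel₀ (by simp [Fintype.card_ne_zero]), one_smul]

theorem meanMatrix_mulVec_one : meanMatrix ι *ᵥ 1 = 1 := by
  rcases isEmpty_or_nonempty ι
  · exact Subsingleton.elim _ _
  · rw [meanMatrix, smul_mulVec, vecMulVec_mulVec, one_dotProduct_one]
    ext
    simp [Fintype.card_ne_zero]

theorem meanMatrix_transpose : (meanMatrix ι)ᵀ = meanMatrix ι := by
  rw [meanMatrix, transpose_smul, transpose_vecMulVec]

theorem isIdempotentElem_meanMatrix : IsIdempotentElem (meanMatrix ι) := by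
  unfold IsIdempotentElem
  nth_rewrite 2 [meanMatrix]
  rw [Matrix.mul_smul, mul_vecMulVec, meanMatrix_mulVec_one, meanMatrix]

variable [DecidableEq ι]

theorem one_sub_meanMatrix_mulVec_one : (1 - meanMatrix ι) *ᵥ 1 = 0 := by
  rw [sub_mulVec, one_mulVec, meanMatrix_mulVec_one, sub_self]

theorem mul_one_sub_meanMatrix_mul_transpose [DecidableEq κ] {S : Matrix κ ι ℝ}
    (hSS : S * Sᵀ = 1) (hS1 : S *ᵥ 1 = 1) :
    S * (1 - meanMatrix ι) * (S * (1 - meanMatrix ι))ᵀ =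
      1 - (Fintype.card ι : ℝ)⁻¹ • vecMulVec 1 1 := by
  have hC : (1 - meanMatrix ι) * (1 - meanMatrix ι)ᵀ = 1 - meanMatrix ι := by
    rw [transpose_sub, transpose_one, meanMatrix_transpose, isIdempotentElem_meanMatrix.one_sub]
  rw [transpose_mul, Matrix.mul_assoc, ← Matrix.mul_assoc (1 - _), hC, ← Matrix.mul_assoc,
    Matrix.mul_sub, Matrix.sub_mul, Matrix.mul_one, hSS, meanMatrix, Matrix.mul_smul,
    Matrix.smul_mul, mul_vecMulVec, vecMulVec_mul, hS1, ← mulVec_transpose, transpose_transpose,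
    hS1]

theorem transpose_mulVec_one_eq_card_smul_colMean_sub [Fintype κ] {S : Matrix κ ι ℝ}
    (hS1 : S *ᵥ 1 = 1) (X : Matrix ι π ℝ) :
    (S * (1 - meanMatrix ι) * X)ᵀ *ᵥ 1 =
      (Fintype.card κ : ℝ) • (colMean (S * X) - colMean X) := by
  have hJ : (1 : κ → ℝ) ᵥ* S ᵥ* meanMatrix ι =
      ((Fintype.card κ : ℝ) * (Fintype.card ι : ℝ)⁻¹) • 1 := by
    rw [meanMatrix, vecMul_smul, vecMul_vecMulVec, ← dotProduct_mulVec, hS1, one_dotProduct_one,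
      smul_smul, mul_comm]
  rw [smul_sub, natCast_card_smul_colMean, colMean, smul_smul, mulVec_transpose,
    mulVec_transpose, ← vecMul_vecMul, ← vecMul_vecMul, vecMul_sub, vecMul_one, hJ,
    sub_vecMul, smul_vecMul]
  simp only [mulVec_transpose, vecMul_vecMul]

end Centering

section Selection

variable {ι κ R : Type*} [Fintype ι] [DecidableEq ι] [NonAssocSemiring R]

theorem one_submatrix_mul_transpose_self [DecidableEq κ] {φ : κ → ι}
    (hφ : Function.Injective φ) :
    (1 : Matrix ι ι R).submatrix φ id * ((1 : Matrix ι ι R).submatrix φ id)ᵀ = 1 := by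
  have h := one_submatrix_mul φ (Equiv.refl ι) ((1 : Matrix ι ι R).submatrix φ id)ᵀ
  simp only [Equiv.coe_refl, Equiv.refl_symm, Function.id_comp] at h
  rw [h, transpose_submatrix, transpose_one, submatrix_submatrix]
  exact submatrix_one φ hφ

theorem one_submatrix_mulVec_one (φ : κ → ι) : (1 : Matrix ι ι R).submatrix φ id *ᵥ 1 = 1 := by
  rw [← Equiv.coe_refl, submatrix_mulVec_equiv]
  simp

end Selection

section LeastSquares

variable {ι κ π : Type*} [Fintype ι] [Fintype κ] [Fintype π] [DecidableEq π]

theorem inv_gram_mulVec_transpose_mulVec_centered {M : Matrix κ ι ℝ} (hM : M *ᵥ 1 = 0)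
    (X : Matrix ι π ℝ) (hG : IsUnit ((M * X)ᵀ * (M * X))) (α : ℝ) (β : π → ℝ) (e : ι → ℝ) :
    ((M * X)ᵀ * (M * X))⁻¹ *ᵥ ((M * X)ᵀ *ᵥ (M *ᵥ (α • 1 + X *ᵥ β + e))) =
      β + (((M * X)ᵀ * (M * X))⁻¹ * (M * X)ᵀ * M) *ᵥ e := by
  set Xc := M * X
  have hGG : (Xcᵀ * Xc)⁻¹ * (Xcᵀ * Xc) = 1 :=
    nonsing_inv_mul _ ((isUnit_iff_isUnit_det _).mp hG)
  have hy : M *ᵥ (α • 1 + X *ᵥ β + e) = Xc *ᵥ β + M *ᵥ e := by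
    rw [mulVec_add, mulVec_add, mulVec_smul, hM, smul_zero, zero_add, mulVec_mulVec]
  have hβ : (Xcᵀ * Xc)⁻¹ *ᵥ (Xcᵀ *ᵥ (Xc *ᵥ β)) = β := by
    rw [mulVec_mulVec, mulVec_mulVec, Matrix.mul_assoc, hGG, one_mulVec]
  rw [hy, mulVec_add, mulVec_add, hβ, mulVec_mulVec, mulVec_mulVec, Matrix.mul_assoc]

theorem inv_gram_mul_transpose_mul_mul_transpose {Xc : Matrix κ π ℝ} {M : Matrix κ ι ℝ}
    [DecidableEq κ] (c : ℝ) (hMM : M * Mᵀ = 1 - c • vecMulVec 1 1) (hG : IsUnit (Xcᵀ * Xc)) :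
    (Xcᵀ * Xc)⁻¹ * Xcᵀ * M * ((Xcᵀ * Xc)⁻¹ * Xcᵀ * M)ᵀ =
      (Xcᵀ * Xc)⁻¹ - c • ((Xcᵀ * Xc)⁻¹ * vecMulVec (Xcᵀ *ᵥ 1) (Xcᵀ *ᵥ 1) * (Xcᵀ * Xc)⁻¹) := by
  have hGG : (Xcᵀ * Xc)⁻¹ * (Xcᵀ * Xc) = 1 :=
    nonsing_inv_mul _ ((isUnit_iff_isUnit_det _).mp hG)
  have hsymm : (Xcᵀ * Xc)⁻¹ᵀ = (Xcᵀ * Xc)⁻¹ := by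
    rw [transpose_nonsing_inv, transpose_mul, transpose_transpose]
  have hmid : Xcᵀ * (M * Mᵀ) * Xc = Xcᵀ * Xc - c • vecMulVec (Xcᵀ *ᵥ 1) (Xcᵀ *ᵥ 1) := by
    rw [hMM, Matrix.mul_sub, Matrix.sub_mul, Matrix.mul_one, Matrix.mul_smul, Matrix.smul_mul,
      mul_vecMulVec, vecMulVec_mul, ← mulVec_transpose]
  calc (Xcᵀ * Xc)⁻¹ * Xcᵀ * M * ((Xcᵀ * Xc)⁻¹ * Xcᵀ * M)ᵀ
      = (Xcᵀ * Xc)⁻¹ * (Xcᵀ * (M * Mᵀ) * Xc) * (Xcᵀ * Xc)⁻¹ := by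
        simp only [transpose_mul, transpose_transpose, hsymm, Matrix.mul_assoc]
    _ = _ := by
        rw [hmid, Matrix.mul_sub, hGG, Matrix.sub_mul, Matrix.one_mul, Matrix.mul_smul,
          Matrix.smul_mul]

end LeastSquares

theorem integral_mulVec_mul_mulVec_of_uncorrelated {Ω ι κ ν : Type*} [MeasurableSpace Ω]
    {μ : Measure Ω} [Fintype ι] [DecidableEq ι] {ε : Ω → ι → ℝ} {σ2 : ℝ}
    (hL2 : ∀ i, MemLp (fun ω => ε ω i) 2 μ)
    (hcov : ∀ i j, ∫ ω, ε ω i * ε ω j ∂μ = if i = j then σ2 else 0)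
    (A : Matrix κ ι ℝ) (B : Matrix ν ι ℝ) (k : κ) (l : ν) :
    ∫ ω, (A *ᵥ ε ω) k * (B *ᵥ ε ω) l ∂μ = σ2 * (A * Bᵀ) k l := by
  have hint : ∀ i j, Integrable (fun ω => ε ω i * ε ω j) μ :=
    fun i j => (hL2 i).integrable_mul (hL2 j)
  have hexpand : ∀ ω, (A *ᵥ ε ω) k * (B *ᵥ ε ω) l =
      ∑ i, ∑ j, A k i * B l j * (ε ω i * ε ω j) := by
    intro ω
    simp only [mulVec, dotProduct, Finset.sum_mul_sum]
    exact Finset.sum_congr rfl fun i _ => Finset.sum_congr rfl fun j _ => by ring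
  simp_rw [hexpand]
  rw [integral_finsetSum _ fun i _ => integrable_finsetSum _ fun j _ => (hint i j).const_mul _]
  simp_rw [integral_finsetSum _ fun j _ => (hint _ j).const_mul _, integral_const_mul, hcov,
    mul_ite, mul_zero, Finset.sum_ite_eq, Finset.mem_univ, if_true, mul_apply, transpose_apply,
    Finset.mul_sum]
  exact Finset.sum_congr rfl fun i _ => by ring

theorem subsample_centered_ols_variance_general {Ω : Type*} [MeasureSpace Ω]
    (n r p : ℕ)
    (X : Matrix (Fin n) (Fin p) ℝ) (α : ℝ) (β : Fin p → ℝ) (σ2 : ℝ)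
    (ε : Ω → Fin n → ℝ)
    (hεL2 : ∀ i, MemLp (fun ω => ε ω i) 2)
    (hεcov : ∀ i j, ∫ ω, ε ω i * ε ω j = if i = j then σ2 else 0)
    (y : Ω → Fin n → ℝ)
    (hy : ∀ ω, y ω = α • (1 : Fin n → ℝ) + X *ᵥ β + ε ω)
    (S : Matrix (Fin r) (Fin n) ℝ)
    (hS : ∃ φ : Fin r → Fin n, Function.Injective φ ∧
      ∀ i j, S i j = if j = φ i then 1 else 0)
    (Jn : Matrix (Fin n) (Fin n) ℝ)
    (hJn : Jn = (n : ℝ)⁻¹ • vecMulVec (1 : Fin n → ℝ) (1 : Fin n → ℝ))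
    (Xc : Matrix (Fin r) (Fin p) ℝ) (hXc : Xc = S * (1 - Jn) * X)
    (hinv : IsUnit (Xcᵀ * Xc))
    (yc : Ω → Fin r → ℝ) (hyc : ∀ ω, yc ω = (S * (1 - Jn)) *ᵥ y ω)
    (βc : Ω → Fin p → ℝ)
    (hβc : ∀ ω, βc ω = (Xcᵀ * Xc)⁻¹ *ᵥ (Xcᵀ *ᵥ yc ω))
    (xbar : Fin p → ℝ) (hxbar : xbar = (n : ℝ)⁻¹ • (Xᵀ *ᵥ (1 : Fin n → ℝ)))
    (xbarstar : Fin p → ℝ)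
    (hxbarstar : xbarstar = (r : ℝ)⁻¹ • ((S * X)ᵀ *ᵥ (1 : Fin r → ℝ))) :
    ∀ k l, ∫ ω, (βc ω k - β k) * (βc ω l - β l) =
      (σ2 • (Xcᵀ * Xc)⁻¹ -
        (σ2 * (r : ℝ) ^ 2 / (n : ℝ)) •
          ((Xcᵀ * Xc)⁻¹ * vecMulVec (xbarstar - xbar) (xbarstar - xbar) *
            (Xcᵀ * Xc)⁻¹)) k l := by
  obtain ⟨φ, hφ, hSφ⟩ := hS
  have hSsub : S = (1 : Matrix (Fin n) (Fin n) ℝ).submatrix φ id := by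
    ext i j
    simp [hSφ, one_apply, eq_comm]
  have hSS : S * Sᵀ = 1 := hSsub ▸ one_submatrix_mul_transpose_self hφ
  have hS1 : S *ᵥ 1 = 1 := hSsub ▸ one_submatrix_mulVec_one φ
  obtain rfl : Jn = meanMatrix (Fin n) := by rw [hJn, meanMatrix, Fintype.card_fin]
  set M := S * (1 - meanMatrix (Fin n)) with hM
  have hM1 : M *ᵥ 1 = 0 := by
    rw [hM, ← mulVec_mulVec, one_sub_meanMatrix_mulVec_one, mulVec_zero]
  subst hXc
  have hres : ∀ ω, βc ω - β = (((M * X)ᵀ * (M * X))⁻¹ * (M * X)ᵀ * M) *ᵥ ε ω := fun ω => by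
    rw [hβc, hyc, hy, inv_gram_mulVec_transpose_mulVec_centered hM1 X hinv, add_sub_cancel_left]
  have hcol : (M * X)ᵀ *ᵥ 1 = (r : ℝ) • (xbarstar - xbar) := by
    rw [transpose_mulVec_one_eq_card_smul_colMean_sub hS1, hxbar, hxbarstar, colMean,
      colMean, Fintype.card_fin, Fintype.card_fin]
  have hcov := inv_gram_mul_transpose_mul_mul_transpose _
    (mul_one_sub_meanMatrix_mul_transpose hSS hS1) hinv
  rw [hcol, Fintype.card_fin, smul_vecMulVec, vecMulVec_smul] at hcov
  intro k l
  simp_rw [← Pi.sub_apply, hres]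
  rw [integral_mulVec_mul_mulVec_of_uncorrelated hεL2 hεcov, hcov]
  simp only [Matrix.sub_apply, Matrix.smul_apply, smul_eq_mul, Matrix.mul_smul, Matrix.smul_mul]
  ring

/-- Covariance matrix of the no-intercept subsample OLS slope estimator
computed from the centered full data:
`Var(β̃_c) = σ²(X_c*ᵀX_c*)⁻¹ − σ²(r²/n)(X_c*ᵀX_c*)⁻¹(x̄*−x̄)(x̄*−x̄)ᵀ(X_c*ᵀX_c*)⁻¹`. -/
theorem subsample_centered_ols_variance {Ω : Type*} [MeasureSpace Ω]
    [IsProbabilityMeasure (volume : Measure Ω)]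
    (n r p : ℕ) (hn : 1 ≤ n)
    (X : Matrix (Fin n) (Fin p) ℝ) (α : ℝ) (β : Fin p → ℝ) (σ2 : ℝ)
    (ε : Ω → Fin n → ℝ)
    (hεL2 : ∀ i, MemLp (fun ω => ε ω i) 2)
    (hεmean : ∀ i, ∫ ω, ε ω i = 0)
    (hεcov : ∀ i j, ∫ ω, ε ω i * ε ω j = if i = j then σ2 else 0)
    (y : Ω → Fin n → ℝ)
    (hy : ∀ ω, y ω = α • (1 : Fin n → ℝ) + X *ᵥ β + ε ω)
    (S : Matrix (Fin r) (Fin n) ℝ)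
    (hS : ∃ φ : Fin r → Fin n, Function.Injective φ ∧
      ∀ i j, S i j = if j = φ i then 1 else 0)
    (Jn : Matrix (Fin n) (Fin n) ℝ)
    (hJn : Jn = (n : ℝ)⁻¹ • vecMulVec (1 : Fin n → ℝ) (1 : Fin n → ℝ))
    (Xc : Matrix (Fin r) (Fin p) ℝ) (hXc : Xc = S * (1 - Jn) * X)
    (hinv : IsUnit (Xcᵀ * Xc))
    (yc : Ω → Fin r → ℝ) (hyc : ∀ ω, yc ω = (S * (1 - Jn)) *ᵥ y ω)
    (βc : Ω → Fin p → ℝ)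
    (hβc : ∀ ω, βc ω = (Xcᵀ * Xc)⁻¹ *ᵥ (Xcᵀ *ᵥ yc ω))
    (xbar : Fin p → ℝ) (hxbar : xbar = (n : ℝ)⁻¹ • (Xᵀ *ᵥ (1 : Fin n → ℝ)))
    (xbarstar : Fin p → ℝ)
    (hxbarstar : xbarstar = (r : ℝ)⁻¹ • ((S * X)ᵀ *ᵥ (1 : Fin r → ℝ))) :
    ∀ k l, ∫ ω, (βc ω k - β k) * (βc ω l - β l) =
      (σ2 • (Xcᵀ * Xc)⁻¹ -
        (σ2 * (r : ℝ) ^ 2 / (n : ℝ)) •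
          ((Xcᵀ * Xc)⁻¹ * vecMulVec (xbarstar - xbar) (xbarstar - xbar) *
            (Xcᵀ * Xc)⁻¹)) k l :=
  subsample_centered_ols_variance_general n r p X α β σ2 ε hεL2 hεcov y hy S hS Jn hJn Xc hXc hinv
    yc hyc βc hβc xbar hxbar xbarstar hxbarstar
end

section
/- Let X be an n×p real matrix, let W be an n×n diagonal real matrix with diagonal vector w = W·1_n satisfying 1_nᵀ·w = 1, and define the weighted column-mean vector x̄_w = Xᵀ·w and the ordinary column-mean vector x̄ = n⁻¹·Xᵀ·1_n. Let X_c = (I_n − n⁻¹·1_n·1_nᵀ)·X and X_wc = (I_n − 1_n·wᵀ)·X. Then X_cᵀ·W·X_c − X_wcᵀ·W·X_wc = Xᵀ·(w − n⁻¹·1_n)·(w − n⁻¹·1_n)ᵀ·X = (x̄_w − x̄)·(x̄_w − x̄)ᵀ, which is positive semidefinite; it is zero if x̄_w = x̄. -/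
/-!
Both centerings have the form `X - 1 uᵀ`. Since the weights sum to one, the weighted scatter
about any centre `u` is the scatter about the weighted mean `x̄_w` plus `(x̄_w - u)(x̄_w - u)ᵀ`
(parallel axis theorem); the difference of the two scatters is therefore the rank-one term
for `u = x̄`.
-/

open Matrix

namespace Matrix

variable {ι κ R : Type*} [Fintype ι] [CommRing R]

theorem one_sub_vecMulVec_mul [DecidableEq ι] (a v : ι → R) (X : Matrix ι κ R) :
    (1 - vecMulVec a v) * X = X - vecMulVec a (Xᵀ *ᵥ v) := by
  rw [Matrix.sub_mul, Matrix.one_mul, vecMulVec_mul, mulVec_transpose]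

theorem sub_vecMulVec_one_transpose_mul_mul (X : Matrix ι κ R) {W : Matrix ι ι R}
    (hW : W.IsSymm) {w : ι → R} (hw : W *ᵥ 1 = w) (hw_sum : 1 ⬝ᵥ w = 1) (u : κ → R) :
    (X - vecMulVec 1 u)ᵀ * W * (X - vecMulVec 1 u) =
      Xᵀ * W * X - vecMulVec (Xᵀ *ᵥ w) (Xᵀ *ᵥ w) +
        vecMulVec (Xᵀ *ᵥ w - u) (Xᵀ *ᵥ w - u) := by
  have hw' : 1 ᵥ* W = w := by rw [← mulVec_transpose, hW.eq, hw]
  rw [transpose_sub, transpose_vecMulVec, Matrix.sub_mul, Matrix.sub_mul, Matrix.mul_sub,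
    Matrix.mul_sub, Matrix.mul_assoc Xᵀ, mul_vecMulVec, ← mulVec_mulVec, hw, vecMulVec_mul,
    hw', vecMulVec_mul, vecMulVec_mul_vecMulVec, ← mulVec_transpose, dotProduct_comm, hw_sum,
    one_smul]
  ext i j
  simp only [sub_apply, add_apply, vecMulVec_apply, Pi.sub_apply]
  ring

theorem transpose_mul_vecMulVec_mul (X : Matrix ι κ R) (a b : ι → R) :
    Xᵀ * vecMulVec a b * X = vecMulVec (Xᵀ *ᵥ a) (Xᵀ *ᵥ b) := by
  rw [mul_vecMulVec, vecMulVec_mul, mulVec_transpose X b]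

end Matrix

theorem weighted_centering_W_quadratic_general (n p : ℕ)
    (X : Matrix (Fin n) (Fin p) ℝ)
    (W : Matrix (Fin n) (Fin n) ℝ)
    (hWdiag : ∀ i j, i ≠ j → W i j = 0)
    (w : Fin n → ℝ) (hw : w = W *ᵥ (1 : Fin n → ℝ))
    (hwsum : (1 : Fin n → ℝ) ⬝ᵥ w = 1)
    (xbar : Fin p → ℝ) (hxbar : xbar = (n : ℝ)⁻¹ • (Xᵀ *ᵥ (1 : Fin n → ℝ)))
    (xbarw : Fin p → ℝ) (hxbarw : xbarw = Xᵀ *ᵥ w)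
    (Xc : Matrix (Fin n) (Fin p) ℝ)
    (hXc : Xc = (1 - (n : ℝ)⁻¹ • vecMulVec (1 : Fin n → ℝ) (1 : Fin n → ℝ)) * X)
    (Xwc : Matrix (Fin n) (Fin p) ℝ)
    (hXwc : Xwc = (1 - vecMulVec (1 : Fin n → ℝ) w) * X) :
    Xcᵀ * W * Xc - Xwcᵀ * W * Xwc =
      Xᵀ * vecMulVec (w - (n : ℝ)⁻¹ • (1 : Fin n → ℝ)) (w - (n : ℝ)⁻¹ • (1 : Fin n → ℝ)) *
        X ∧
    Xcᵀ * W * Xc - Xwcᵀ * W * Xwc = vecMulVec (xbarw - xbar) (xbarw - xbar) ∧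
    (Xcᵀ * W * Xc - Xwcᵀ * W * Xwc).PosSemidef ∧
    (xbarw = xbar → Xcᵀ * W * Xc - Xwcᵀ * W * Xwc = 0) := by
  have hW : W.IsSymm := IsDiag.isSymm fun i j => hWdiag i j
  have hXc' : Xc = X - vecMulVec 1 xbar := by
    rw [hXc, ← vecMulVec_smul, one_sub_vecMulVec_mul, mulVec_smul, hxbar]
  have hXwc' : Xwc = X - vecMulVec 1 xbarw := by
    rw [hXwc, one_sub_vecMulVec_mul, hxbarw]
  have key : Xcᵀ * W * Xc - Xwcᵀ * W * Xwc = vecMulVec (xbarw - xbar) (xbarw - xbar) := by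
    simp only [hXc', hXwc', X.sub_vecMulVec_one_transpose_mul_mul hW hw.symm hwsum, ← hxbarw,
      sub_self, zero_vecMulVec, add_zero, add_sub_cancel_left]
  refine ⟨?_, key, ?_, fun h => by rw [key, h, sub_self, zero_vecMulVec]⟩
  · rw [key, transpose_mul_vecMulVec_mul, mulVec_sub, mulVec_smul, ← hxbar, ← hxbarw]
  · simpa only [key, star_trivial] using posSemidef_vecMulVec_self_star (xbarw - xbar)

/-- With `W` diagonal, weights summing to one, `X_c` the ordinarily centered
and `X_wc` the weighted-mean centered design matrix,
`X_cᵀWX_c − X_wcᵀWX_wc = Xᵀ(w − n⁻¹1_n)(w − n⁻¹1_n)ᵀX = (x̄_w − x̄)(x̄_w − x̄)ᵀ ⪰ 0`,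
with equality to zero if `x̄_w = x̄`. -/
theorem weighted_centering_W_quadratic (n p : ℕ) (hn : 1 ≤ n)
    (X : Matrix (Fin n) (Fin p) ℝ)
    (W : Matrix (Fin n) (Fin n) ℝ)
    (hWdiag : ∀ i j, i ≠ j → W i j = 0)
    (w : Fin n → ℝ) (hw : w = W *ᵥ (1 : Fin n → ℝ))
    (hwsum : (1 : Fin n → ℝ) ⬝ᵥ w = 1)
    (xbar : Fin p → ℝ) (hxbar : xbar = (n : ℝ)⁻¹ • (Xᵀ *ᵥ (1 : Fin n → ℝ)))
    (xbarw : Fin p → ℝ) (hxbarw : xbarw = Xᵀ *ᵥ w)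
    (Xc : Matrix (Fin n) (Fin p) ℝ)
    (hXc : Xc = (1 - (n : ℝ)⁻¹ • vecMulVec (1 : Fin n → ℝ) (1 : Fin n → ℝ)) * X)
    (Xwc : Matrix (Fin n) (Fin p) ℝ)
    (hXwc : Xwc = (1 - vecMulVec (1 : Fin n → ℝ) w) * X) :
    Xcᵀ * W * Xc - Xwcᵀ * W * Xwc =
      Xᵀ * vecMulVec (w - (n : ℝ)⁻¹ • (1 : Fin n → ℝ)) (w - (n : ℝ)⁻¹ • (1 : Fin n → ℝ)) *
        X ∧
    Xcᵀ * W * Xc - Xwcᵀ * W * Xwc = vecMulVec (xbarw - xbar) (xbarw - xbar) ∧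
    (Xcᵀ * W * Xc - Xwcᵀ * W * Xwc).PosSemidef ∧
    (xbarw = xbar → Xcᵀ * W * Xc - Xwcᵀ * W * Xwc = 0) :=
  weighted_centering_W_quadratic_general n p X W hWdiag w hw hwsum xbar hxbar xbarw hxbarw Xc hXc
    Xwc hXwc
end
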